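/- With ζ and σ as above (z > 1), σ''(z) = (6σ⁶ + 4σ⁴ζ - zσ³ - 1)/(2σζ²). -/

import Mathlib

/-!
Write `I z = (3/2) ∫₁^z √(t²-1) dt`, so `ζ = I^{2/3}` and `σ = √ζ / √(z²-1)`.
Differentiating `I` gives `ζ' = √(z²-1) / I^{1/3} = 1/σ`. Differentiating the identity
`σ² (z²-1) = ζ` then gives `σ' = (1 - 2zσ³)/(2ζ)`, valid on all of `z > 1`, and one more
application of the quotient rule, with `ζ' = 1/σ` and `z² - 1 = ζ/σ²`, yields `σ''`.
-/

noncomputable def zeta (z : ℝ) : ℝ :=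
  ((3 / 2) * ∫ t in (1:ℝ)..z, Real.sqrt (t ^ 2 - 1)) ^ ((2 : ℝ) / 3)

noncomputable def sigma (z : ℝ) : ℝ := Real.sqrt (zeta z / (z ^ 2 - 1))

open Real Filter

lemma continuous_sqrt_sq_sub_one : Continuous (fun t : ℝ => √(t ^ 2 - 1)) := by fun_prop

lemma hasDerivAt_integral_sqrt_sq_sub_one (z : ℝ) :
    HasDerivAt (fun x => ∫ t in (1:ℝ)..x, √(t ^ 2 - 1)) (√(z ^ 2 - 1)) z :=
  intervalIntegral.integral_hasDerivAt_right
    (continuous_sqrt_sq_sub_one.intervalIntegrable _ _)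
    (continuous_sqrt_sq_sub_one.stronglyMeasurableAtFilter _ _)
    continuous_sqrt_sq_sub_one.continuousAt

lemma sq_sub_one_pos {z : ℝ} (hz : 1 < z) : 0 < z ^ 2 - 1 := by nlinarith

lemma integral_sqrt_sq_sub_one_pos {z : ℝ} (hz : 1 < z) :
    0 < ∫ t in (1:ℝ)..z, √(t ^ 2 - 1) :=
  intervalIntegral.intervalIntegral_pos_of_pos_on
    (continuous_sqrt_sq_sub_one.intervalIntegrable _ _)
    (fun _ ht => sqrt_pos.mpr (sq_sub_one_pos ht.1)) hz

lemma zeta_pos {z : ℝ} (hz : 1 < z) : 0 < zeta z :=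
  rpow_pos_of_pos (by linarith [integral_sqrt_sq_sub_one_pos hz]) _

lemma sqrt_zeta {z : ℝ} (hz : 1 < z) :
    √(zeta z) = ((3 / 2) * ∫ t in (1:ℝ)..z, √(t ^ 2 - 1)) ^ ((1 : ℝ) / 3) := by
  have hI : 0 ≤ (3 / 2) * ∫ t in (1:ℝ)..z, √(t ^ 2 - 1) := by
    linarith [integral_sqrt_sq_sub_one_pos hz]
  rw [zeta, sqrt_eq_rpow, ← rpow_mul hI]
  norm_num

lemma sigma_pos {z : ℝ} (hz : 1 < z) : 0 < sigma z :=
  sqrt_pos.mpr (div_pos (zeta_pos hz) (sq_sub_one_pos hz))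

lemma sigma_eq_sqrt_div_sqrt {z : ℝ} (hz : 1 < z) : sigma z = √(zeta z) / √(z ^ 2 - 1) :=
  sqrt_div (zeta_pos hz).le _

lemma sigma_sq_mul {z : ℝ} (hz : 1 < z) : sigma z ^ 2 * (z ^ 2 - 1) = zeta z := by
  rw [sigma, sq_sqrt (div_pos (zeta_pos hz) (sq_sub_one_pos hz)).le]
  field_simp [(sq_sub_one_pos hz).ne']

lemma hasDerivAt_zeta {z : ℝ} (hz : 1 < z) : HasDerivAt zeta (sigma z)⁻¹ z := by
  set I := (3 / 2) * ∫ t in (1:ℝ)..z, √(t ^ 2 - 1) with hI_def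
  have hI : 0 < I := by linarith [integral_sqrt_sq_sub_one_pos hz]
  have hpow := ((hasDerivAt_integral_sqrt_sq_sub_one z).const_mul (3 / 2)).rpow_const
    (p := (2 : ℝ) / 3) (Or.inl hI.ne')
  refine hpow.congr_deriv ?_
  have hexp : I ^ ((2 : ℝ) / 3 - 1) = (I ^ ((1 : ℝ) / 3))⁻¹ := by
    rw [← rpow_neg hI.le]; norm_num
  rw [sigma_eq_sqrt_div_sqrt hz, sqrt_zeta hz, ← hI_def, hexp]
  field_simp

lemma hasDerivAt_sigma {z : ℝ} (hz : 1 < z) :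
    HasDerivAt sigma ((1 - 2 * z * sigma z ^ 3) / (2 * zeta z)) z := by
  have hquot := (hasDerivAt_zeta hz).div ((hasDerivAt_pow 2 z).sub_const 1)
    (sq_sub_one_pos hz).ne'
  refine (hquot.sqrt (div_pos (zeta_pos hz) (sq_sub_one_pos hz)).ne').congr_deriv ?_
  have hσ : sigma z ≠ 0 := (sigma_pos hz).ne'
  rw [Pi.div_apply, ← sigma, ← sigma_sq_mul hz]
  field_simp
  push_cast
  ring

lemma hasDerivAt_deriv_sigma {z : ℝ} (hz : 1 < z) :
    HasDerivAt (deriv sigma)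
      ((6 * sigma z ^ 6 + 4 * sigma z ^ 4 * zeta z - z * sigma z ^ 3 - 1)
        / (2 * sigma z * zeta z ^ 2)) z := by
  have hderiv : (fun w => (1 - 2 * w * sigma w ^ 3) / (2 * zeta w)) =ᶠ[nhds z] deriv sigma := by
    filter_upwards [Ioi_mem_nhds hz] with w hw
    exact (hasDerivAt_sigma hw).deriv.symm
  have hquot := ((hasDerivAt_const z 1).sub
      (((hasDerivAt_id z).const_mul 2).mul ((hasDerivAt_sigma hz).pow 3))).div
    ((hasDerivAt_zeta hz).const_mul 2) (mul_pos two_pos (zeta_pos hz)).ne'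
  refine (hquot.congr_of_eventuallyEq hderiv.symm).congr_deriv ?_
  have hσ : sigma z ≠ 0 := (sigma_pos hz).ne'
  have hζ : zeta z ≠ 0 := (zeta_pos hz).ne'
  simp only [Pi.sub_apply, Pi.mul_apply, Pi.pow_apply, id]
  field_simp
  linear_combination 6 * sigma z ^ 4 * sigma_sq_mul hz

theorem sigma_second_deriv :
    ∀ z : ℝ, 1 < z →
      deriv (deriv sigma) z
        = (6 * (sigma z) ^ 6 + 4 * (sigma z) ^ 4 * zeta z - z * (sigma z) ^ 3 - 1)
            / (2 * sigma z * (zeta z) ^ 2) :=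
  fun _ hz => (hasDerivAt_deriv_sigma hz).deriv
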